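/- Let g ≥ 3 be an integer and suppose positive integers a > b > c, digits d₂, d₃ ∈ {1,…,g−1} and integers n₂, n₃ ≥ 2 with n₂ ≤ n₃ satisfy ab+1 = d₃(g^{n₃}−1)/(g−1) and ac+1 = d₂(g^{n₂}−1)/(g−1). If the rational numbers d₃·g^{n₃}/(d₃+g−1) and d₂·g^{n₂}/(d₂+g−1) are multiplicatively independent, then a ≤ 4·(2g−2)^{5√(n₃)+1}. -/

import Mathlib

/-!
Since `a ∣ ab(g - 1)`, the hypotheses say `d g^n ≡ d + g - 1 (mod a)` for both repdigits, i.e.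
`a` divides numerator minus denominator of `α₃ = d₃ g^n₃ / (d₃ + g - 1)` and of
`α₂ = d₂ g^n₂ / (d₂ + g - 1)`. Dirichlet's approximation theorem gives `0 < v ≤ √n₃` and `u ≤ v`
with `|v n₂ - u n₃| = δ ≤ √n₃`. Cross-multiplying the congruences for `α₂^v` and `α₃^u` and
cancelling the common power of `g`, `a` divides a number built from digits, `g - 1` and `g^δ`
alone, of size at most `(2g - 2)^(2u + v + δ) ≤ (2g - 2)^(4√n₃)`; multiplicative independence
(`α₂^v ≠ α₃^u`) makes that number nonzero.
-/

def MultIndep (α β : ℚ) : Prop :=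
  ∀ u v : ℤ, α ^ u * β ^ v = 1 → u = 0 ∧ v = 0

theorem MultIndep.pow_ne_pow {α β : ℚ} (h : MultIndep α β) (hβ : β ≠ 0) {u v : ℕ}
    (hv : v ≠ 0) : α ^ u ≠ β ^ v := by
  intro huv
  have := h u (-v) (by
    rw [zpow_neg, zpow_natCast, zpow_natCast, huv, mul_inv_cancel₀ (pow_ne_zero v hβ)])
  omega

theorem dvd_mul_pow_sub_of_repdigit {a b d g n : ℕ} (hg : 1 ≤ g)
    (h : (a * b + 1) * (g - 1) = d * (g ^ n - 1)) :
    (a : ℤ) ∣ d * g ^ n - (d + g - 1) := by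
  have hgn : 1 ≤ g ^ n := Nat.one_le_pow _ _ hg
  zify [hg, hgn] at h
  exact ⟨b * (g - 1), by linear_combination -h⟩

/-- Cross-multiplying the two congruences gives `a ∣ g ^ (u * nB) * Y` for the difference `Y`
on the right; multiplying by `dB ^ u` turns `(dB * g ^ nB) ^ u` into `DB ^ u` modulo `a`, which
removes the power of `g` without any coprimality argument. -/
theorem dvd_pow_mul_sub {R : Type*} [CommRing R] {a g dA dB DA DB : R} {nA nB u v δ : ℕ}
    (hA : a ∣ dA * g ^ nA - DA) (hB : a ∣ dB * g ^ nB - DB) (h : v * nA = u * nB + δ) :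
    a ∣ DB ^ u * (dA ^ v * DB ^ u * g ^ δ - DA ^ v * dB ^ u) := by
  have hAv : a ∣ (dA * g ^ nA) ^ v - DA ^ v := hA.trans (sub_dvd_pow_sub_pow _ _ v)
  have hBu : a ∣ (dB * g ^ nB) ^ u - DB ^ u := hB.trans (sub_dvd_pow_sub_pow _ _ u)
  have hpow : (dA * g ^ nA) ^ v = dA ^ v * (g ^ nB) ^ u * g ^ δ := by
    rw [mul_pow, ← pow_mul, ← pow_mul, mul_comm nA, h, pow_add, mul_comm nB, mul_assoc]
  have key : DB ^ u * (dA ^ v * DB ^ u * g ^ δ - DA ^ v * dB ^ u) =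
      dB ^ u * (((dA * g ^ nA) ^ v - DA ^ v) * DB ^ u
        - DA ^ v * ((dB * g ^ nB) ^ u - DB ^ u))
      - ((dB * g ^ nB) ^ u - DB ^ u) * (dA ^ v * DB ^ u * g ^ δ - DA ^ v * dB ^ u) := by
    rw [hpow]; ring
  rw [key]
  exact dvd_sub (dvd_mul_of_dvd_right (dvd_sub (dvd_mul_of_dvd_left hAv _)
    (dvd_mul_of_dvd_right hBu _)) _) (dvd_mul_of_dvd_left hBu _)

theorem div_pow_eq_div_pow {K : Type*} [Field K] {g dA dB DA DB : K} {nA nB u v δ : ℕ}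
    (hDA : DA ≠ 0) (hDB : DB ≠ 0) (h : v * nA = u * nB + δ)
    (hY : dA ^ v * DB ^ u * g ^ δ = DA ^ v * dB ^ u) :
    (dA * g ^ nA / DA) ^ v = (dB * g ^ nB / DB) ^ u := by
  rw [div_pow, div_pow, div_eq_div_iff (pow_ne_zero _ hDA) (pow_ne_zero _ hDB), mul_pow,
    mul_pow, ← pow_mul, ← pow_mul, mul_comm nA, h, pow_add, mul_comm nB]
  linear_combination g ^ (u * nB) * hY

theorem le_pow_of_dvd_mul_pow_sub {g a dA dB nA nB u v δ : ℕ} (hg : 2 ≤ g)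
    (hdA : dA ≤ g - 1) (hdB : dB ≤ g - 1)
    (hA : (a : ℤ) ∣ dA * g ^ nA - (dA + g - 1)) (hB : (a : ℤ) ∣ dB * g ^ nB - (dB + g - 1))
    (h : v * nA = u * nB + δ)
    (hne : ((dA : ℚ) * g ^ nA / (dA + g - 1)) ^ v ≠ ((dB : ℚ) * g ^ nB / (dB + g - 1)) ^ u) :
    (a : ℤ) ≤ (2 * g - 2) ^ (2 * u + v + δ) := by
  set K : ℤ := 2 * g - 2
  set DA : ℤ := dA + g - 1
  set DB : ℤ := dB + g - 1
  set Y : ℤ := dA ^ v * DB ^ u * g ^ δ - DA ^ v * dB ^ u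
  have hDA : 0 < DA := by omega
  have hDB : 0 < DB := by omega
  have hY : Y ≠ 0 := fun hY ↦ hne <| by
    refine div_pow_eq_div_pow (by exact_mod_cast hDA.ne') (by exact_mod_cast hDB.ne') h ?_
    exact_mod_cast sub_eq_zero.mp hY
  have hYK : |Y| ≤ K ^ v * K ^ u * K ^ δ := by
    have hK : 1 ≤ K := by omega
    refine abs_sub_le_of_nonneg_of_le (by positivity) ?_ (by positivity) ?_
    · gcongr <;> omega
    · calc DA ^ v * (dB : ℤ) ^ u ≤ K ^ v * K ^ u := by gcongr <;> omega
        _ ≤ K ^ v * K ^ u * K ^ δ := le_mul_of_one_le_right (by positivity) (one_le_pow₀ hK)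
  calc (a : ℤ) ≤ |DB ^ u * Y| :=
        Int.le_of_dvd (abs_pos.mpr (mul_ne_zero (pow_ne_zero _ hDB.ne') hY))
          ((dvd_abs _ _).mpr (dvd_pow_mul_sub hA hB h))
    _ = DB ^ u * |Y| := by rw [abs_mul, abs_of_pos (pow_pos hDB _)]
    _ ≤ K ^ u * (K ^ v * K ^ u * K ^ δ) :=
        mul_le_mul (pow_le_pow_left₀ hDB.le (by omega) u) hYK (abs_nonneg _)
          (pow_nonneg (by omega) _)
    _ = K ^ (2 * u + v + δ) := by ring

theorem exists_int_abs_mul_sub_mul_lt_sqrt_succ {m n : ℕ} (hn : 0 < n) (hmn : m ≤ n) :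
    ∃ j k : ℤ, 0 ≤ j ∧ j ≤ k ∧ 0 < k ∧ k ≤ n.sqrt ∧ |k * m - j * n| < n.sqrt + 1 := by
  set s := n.sqrt
  have hs : 0 < s := Nat.sqrt_pos.mpr hn
  obtain ⟨j, k, hk, hks, hjk⟩ := Real.exists_int_int_abs_mul_sub_le ((m : ℝ) / n) hs
  have hnR : (0 : ℝ) < n := by exact_mod_cast hn
  have hsR : (1 : ℝ) ≤ s := by exact_mod_cast hs
  have hmnR : (m : ℝ) / n ≤ 1 := div_le_one_of_le₀ (by exact_mod_cast hmn) hnR.le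
  have hkR : (1 : ℝ) ≤ k := by exact_mod_cast hk
  obtain ⟨hlo, hhi⟩ := abs_lt.mp (hjk.trans_lt ((div_lt_one (by linarith)).mpr (by linarith)))
  have hj : (-1 : ℤ) < j := by
    have : (0 : ℝ) ≤ k * (m / n) := by positivity
    exact_mod_cast (by linarith : (-1 : ℝ) < j)
  have hjk : j < k + 1 := by
    have : (k : ℝ) * (m / n) ≤ k := mul_le_of_le_one_right (by linarith) hmnR
    exact_mod_cast (by linarith : (j : ℝ) < k + 1)
  refine ⟨j, k, by omega, by omega, hk, hks, ?_⟩
  have hsq : (n : ℝ) < (s + 1) ^ 2 := by exact_mod_cast Nat.lt_succ_sqrt' n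
  have : |(k : ℝ) * m - j * n| < s + 1 := by
    calc |(k : ℝ) * m - j * n| = |(n : ℝ) * (k * (m / n) - j)| := by
          congr 1; field_simp
      _ = n * |(k : ℝ) * (m / n) - j| := by rw [abs_mul, abs_of_pos hnR]
      _ ≤ n * (1 / (s + 1)) := by gcongr
      _ < s + 1 := by rw [mul_one_div, div_lt_iff₀ (by positivity)]; nlinarith
  exact_mod_cast this

theorem exists_mul_eq_mul_add_le_sqrt {m n : ℕ} (hn : 0 < n) (hmn : m ≤ n) :
    ∃ u v δ : ℕ, 0 < v ∧ u ≤ v ∧ v ≤ n.sqrt ∧ δ ≤ n.sqrt ∧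
      (v * m = u * n + δ ∨ u * n = v * m + δ) := by
  obtain ⟨j, k, hj, hjk, hk, hks, hclose⟩ := exists_int_abs_mul_sub_mul_lt_sqrt_succ hn hmn
  lift k to ℕ using hk.le
  lift j to ℕ using hj
  rcases le_total (j * n) (k * m) with h | h
  · obtain ⟨δ, hδ⟩ := Nat.exists_eq_add_of_le h
    refine ⟨j, k, δ, by omega, by omega, by omega, ?_, Or.inl hδ⟩
    have : (k : ℤ) * m - j * n = δ := by zify at hδ; linarith
    rw [this, abs_of_nonneg (by positivity)] at hclose
    omega
  · obtain ⟨δ, hδ⟩ := Nat.exists_eq_add_of_le h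
    refine ⟨j, k, δ, by omega, by omega, by omega, ?_, Or.inr hδ⟩
    have : (k : ℤ) * m - j * n = -δ := by zify at hδ; linarith
    rw [this, abs_neg, abs_of_nonneg (by positivity)] at hclose
    omega

theorem stmt_10_general (g a b c d₂ d₃ n₂ n₃ : ℕ) (hg : 3 ≤ g)
    (hd₂ : 1 ≤ d₂) (hd₂' : d₂ ≤ g - 1) (hd₃' : d₃ ≤ g - 1)
    (hn₃ : 2 ≤ n₃) (hn₂₃ : n₂ ≤ n₃)
    (hab : (a * b + 1) * (g - 1) = d₃ * (g ^ n₃ - 1))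
    (hac : (a * c + 1) * (g - 1) = d₂ * (g ^ n₂ - 1))
    (hind : MultIndep ((d₃ : ℚ) * g ^ n₃ / (d₃ + g - 1)) ((d₂ : ℚ) * g ^ n₂ / (d₂ + g - 1))) :
    (a : ℝ) ≤ 4 * (2 * (g : ℝ) - 2) ^ (5 * Real.sqrt n₃ + 1) := by
  have h₃ := dvd_mul_pow_sub_of_repdigit (by omega) hab
  have h₂ := dvd_mul_pow_sub_of_repdigit (by omega) hac
  obtain ⟨u, v, δ, hv, huv, hvs, hδs, hcases⟩ :=
    exists_mul_eq_mul_add_le_sqrt (by omega : 0 < n₃) hn₂₃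
  have hα₂ : (d₂ : ℚ) * g ^ n₂ / (d₂ + g - 1) ≠ 0 := by
    have : (3 : ℚ) ≤ g := by exact_mod_cast hg
    have : (1 : ℚ) ≤ d₂ := by exact_mod_cast hd₂
    exact div_ne_zero (by positivity) (by linarith)
  have hne := hind.pow_ne_pow hα₂ (u := u) hv.ne'
  have hK : (1 : ℤ) ≤ 2 * g - 2 := by omega
  have ha : (a : ℤ) ≤ (2 * g - 2) ^ (4 * n₃.sqrt) := by
    rcases hcases with h | h
    · exact (le_pow_of_dvd_mul_pow_sub (by omega) hd₂' hd₃' h₂ h₃ h hne.symm).trans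
        (pow_le_pow_right₀ hK (by omega))
    · exact (le_pow_of_dvd_mul_pow_sub (by omega) hd₃' hd₂' h₃ h₂ h hne).trans
        (pow_le_pow_right₀ hK (by omega))
  have hexp : ((4 * n₃.sqrt : ℕ) : ℝ) ≤ 5 * Real.sqrt n₃ + 1 := by
    push_cast
    linarith [Real.nat_sqrt_le_real_sqrt (a := n₃), Real.sqrt_nonneg n₃]
  have hKR : (1 : ℝ) ≤ 2 * g - 2 := by exact_mod_cast hK
  calc (a : ℝ) ≤ (2 * g - 2) ^ ((4 * n₃.sqrt : ℕ) : ℝ) := by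
        rw [Real.rpow_natCast]; exact_mod_cast ha
    _ ≤ (2 * g - 2) ^ (5 * Real.sqrt n₃ + 1) := Real.rpow_le_rpow_of_exponent_le hKR hexp
    _ ≤ 4 * (2 * (g : ℝ) - 2) ^ (5 * Real.sqrt n₃ + 1) :=
        le_mul_of_one_le_left (Real.rpow_nonneg (by linarith) _) (by norm_num)

theorem stmt_10 (g a b c d₂ d₃ n₂ n₃ : ℕ) (hg : 3 ≤ g)
    (hc : 0 < c) (hcb : c < b) (hba : b < a)
    (hd₂ : 1 ≤ d₂) (hd₂' : d₂ ≤ g - 1) (hd₃ : 1 ≤ d₃) (hd₃' : d₃ ≤ g - 1)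
    (hn₂ : 2 ≤ n₂) (hn₃ : 2 ≤ n₃) (hn₂₃ : n₂ ≤ n₃)
    (hab : (a * b + 1) * (g - 1) = d₃ * (g ^ n₃ - 1))
    (hac : (a * c + 1) * (g - 1) = d₂ * (g ^ n₂ - 1))
    (hind : MultIndep ((d₃ : ℚ) * g ^ n₃ / (d₃ + g - 1)) ((d₂ : ℚ) * g ^ n₂ / (d₂ + g - 1))) :
    (a : ℝ) ≤ 4 * (2 * (g : ℝ) - 2) ^ (5 * Real.sqrt n₃ + 1) :=
  stmt_10_general g a b c d₂ d₃ n₂ n₃ hg hd₂ hd₂' hd₃' hn₃ hn₂₃ hab hac hind
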